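/- arXiv:1812.00212 — 3 statements merged into one kernel-verified Lean document; each statement's English description precedes it below -/
import Mathlib

section
/- Let (X, μ) be a measure space, 1 ≤ p < ∞, and f : ℝ → ℝ a function such that g ↦ f ∘ g maps L^p(X, μ) to itself and this map is continuous from L^p to L^p. If there exists a measurable set A ⊆ X with 0 < μ(A) < ∞, then f is continuous on ℝ. -/
open MeasureTheory Filter Topology
open scoped ENNReal

/-!
Feed `T_f` the step functions `x_ν χ_A → x χ_A`. Since `f ∘ (u χ_A) - f ∘ (v χ_A) = (f u - f v) χ_A`
and `‖c χ_A‖_p = |c| μ(A)^{1/p}` with `0 < μ(A)^{1/p} < ∞`, convergence in `L^p` of such step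
functions is exactly convergence of their heights, so `f (x_ν) → f x`.
-/

lemma Set.comp_indicator_const_sub_comp_indicator_const {α M G : Type*} [Zero M] [AddGroup G]
    (f : M → G) (s : Set α) (u v : M) :
    f ∘ s.indicator (fun _ => u) - f ∘ s.indicator (fun _ => v) =
      s.indicator fun _ => f u - f v := by
  ext x
  by_cases hx : x ∈ s <;> simp [hx]

lemma ENNReal.tendsto_mul_const_nhds_zero_iff {ι : Type*} {l : Filter ι} {m : ι → ℝ≥0∞}
    {c : ℝ≥0∞} (hc₀ : c ≠ 0) (hc : c ≠ ∞) :
    Tendsto (fun i => m i * c) l (𝓝 0) ↔ Tendsto m l (𝓝 0) := by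
  refine ⟨fun h => ?_, fun h => by simpa using ENNReal.Tendsto.mul_const h (Or.inr hc)⟩
  simpa [mul_assoc, ENNReal.mul_inv_cancel hc₀ hc] using
    ENNReal.Tendsto.mul_const h (Or.inr (ENNReal.inv_ne_top.mpr hc₀))

lemma tendsto_eLpNorm_indicator_const_iff {X ι E : Type*} [MeasurableSpace X] {μ : Measure X}
    [NormedAddCommGroup E] {p : ℝ≥0∞} (hp : p ≠ 0) {s : Set X} (hs : MeasurableSet s)
    (hμs₀ : μ s ≠ 0) (hμs : μ s ≠ ∞) {l : Filter ι} {c : ι → E} :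
    Tendsto (fun i => eLpNorm (s.indicator fun _ => c i) p μ) l (𝓝 0) ↔ Tendsto c l (𝓝 0) := by
  simp_rw [eLpNorm_indicator_const' hs hμs₀ hp, tendsto_zero_iff_enorm_tendsto_zero (f := c)]
  exact ENNReal.tendsto_mul_const_nhds_zero_iff (ENNReal.rpow_pos (pos_iff_ne_zero.2 hμs₀) hμs).ne'
    (ENNReal.rpow_ne_top_of_nonneg (by positivity) hμs)

theorem stmt0_general {X : Type*} [MeasurableSpace X] (μ : Measure X)
    (p : ℝ≥0∞) (hp : 1 ≤ p) (f : ℝ → ℝ)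
    (hcont : ∀ (g : ℕ → X → ℝ) (g₀ : X → ℝ),
      (∀ ν, MemLp (g ν) p μ) → MemLp g₀ p μ →
      Tendsto (fun ν => eLpNorm (g ν - g₀) p μ) atTop (𝓝 0) →
      Tendsto (fun ν => eLpNorm (f ∘ g ν - f ∘ g₀) p μ) atTop (𝓝 0))
    (A : Set X) (hA : MeasurableSet A) (hA0 : 0 < μ A) (hAfin : μ A < ∞) :
    Continuous f := by
  have hp0 : p ≠ 0 := (zero_lt_one.trans_le hp).ne'
  have hstep (a : ℝ) : MemLp (A.indicator fun _ => a) p μ :=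
    memLp_indicator_const p hA a (Or.inr hAfin.ne)
  have hstep_tendsto (c : ℕ → ℝ) :
      Tendsto (fun ν => eLpNorm (A.indicator fun _ => c ν) p μ) atTop (𝓝 0) ↔
        Tendsto c atTop (𝓝 0) :=
    tendsto_eLpNorm_indicator_const_iff hp0 hA hA0.ne' hAfin.ne
  rw [continuous_iff_seqContinuous]
  intro x x₀ hx
  have hfx := hcont (fun ν => A.indicator fun _ => x ν) (A.indicator fun _ => x₀)
    (fun ν => hstep (x ν)) (hstep x₀) (by
      simpa only [Pi.sub_def, ← Set.indicator_sub, hstep_tendsto] using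
        tendsto_sub_nhds_zero_iff.2 hx)
  simp only [Set.comp_indicator_const_sub_comp_indicator_const, hstep_tendsto] at hfx
  exact tendsto_sub_nhds_zero_iff.1 hfx

/-- If `T_f : g ↦ f ∘ g` maps `L^p(X,μ)` to itself and is continuous from `L^p` to `L^p`
(in the sequential sense), and `μ` has a set of finite positive measure, then `f` is
continuous. -/
theorem stmt0 {X : Type*} [MeasurableSpace X] (μ : Measure X)
    (p : ℝ≥0∞) (hp : 1 ≤ p) (hp' : p ≠ ∞) (f : ℝ → ℝ)
    (hmap : ∀ g : X → ℝ, MemLp g p μ → MemLp (f ∘ g) p μ)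
    (hcont : ∀ (g : ℕ → X → ℝ) (g₀ : X → ℝ),
      (∀ ν, MemLp (g ν) p μ) → MemLp g₀ p μ →
      Tendsto (fun ν => eLpNorm (g ν - g₀) p μ) atTop (𝓝 0) →
      Tendsto (fun ν => eLpNorm (f ∘ g ν - f ∘ g₀) p μ) atTop (𝓝 0))
    (A : Set X) (hA : MeasurableSet A) (hA0 : 0 < μ A) (hAfin : μ A < ∞) :
    Continuous f :=
  stmt0_general μ p hp f hcont A hA hA0 hAfin
end

section
/- Let E_α := { g ∈ Ẇ²_1(ℝ) : g(0) = 0 and α_1 g'(−∞) + α_2 g'(0) + α_3 g'(+∞) = 0 }, where α = (α_1, α_2, α_3) ∈ ℝ³ satisfies α_1 + α_2 + α_3 = 1, and Ẇ²_1(ℝ) is the set of C¹ functions g on ℝ with g'' ∈ L¹(ℝ). Then Ẇ²_1(ℝ) = E_α ⊕ P_1, where P_1 is the space of affine functions, and for every g ∈ E_α one has |g(x)| ≤ |x| (|g'(−∞)| + ‖g''‖_1) for all x ∈ ℝ. -/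
open MeasureTheory Filter Topology
open scoped ENNReal

/-- `g ∈ Ẇ²₁(ℝ)`: `g` is `C¹` and `g'` is absolutely continuous with a second
derivative `h ∈ L¹(ℝ)`. -/
def MemW21dot (g : ℝ → ℝ) : Prop :=
  ContDiff ℝ 1 g ∧ ∃ h : ℝ → ℝ, Integrable h volume ∧
    ∀ x y : ℝ, deriv g y - deriv g x = ∫ t in x..y, h t

/-- Membership in the realization `E_α` of `Ẇ²₁(ℝ)`:
`g(0) = 0` and `α₁ g'(−∞) + α₂ g'(0) + α₃ g'(+∞) = 0`. -/
def MemEalpha (a1 a2 a3 : ℝ) (g : ℝ → ℝ) : Prop :=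
  MemW21dot g ∧ g 0 = 0 ∧ ∃ Lm Lp : ℝ,
    Tendsto (deriv g) atBot (𝓝 Lm) ∧ Tendsto (deriv g) atTop (𝓝 Lp) ∧
    a1 * Lm + a2 * deriv g 0 + a3 * Lp = 0

/-! Every `g ∈ Ẇ²₁(ℝ)` has `g'(±∞) = g'(0) ± ∫_{ℝ_±} g''`. Subtracting an affine function
`a + b x` shifts `g(0)` by `a` and all three values `g'(−∞), g'(0), g'(+∞)` by `b`; since
`α₁ + α₂ + α₃ = 1`, the two conditions defining `E_α` then fix `a = g(0)` and
`b = α₁ g'(−∞) + α₂ g'(0) + α₃ g'(+∞)`, which gives existence and uniqueness at once.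
For the bound, `|g'(t) − g'(−∞)| ≤ ‖g''‖₁`, so `|g'| ≤ |g'(−∞)| + ‖g''‖₁` and the mean value
theorem from `g(0) = 0` concludes. -/

section IntegrableDerivative

variable {E : Type*} [NormedAddCommGroup E] [NormedSpace ℝ E] {f h : ℝ → E}

lemma norm_intervalIntegral_le_integral_norm (x y : ℝ) (hint : Integrable h) :
    ‖∫ t in x..y, h t‖ ≤ ∫ t, ‖h t‖ :=
  intervalIntegral.norm_integral_le_integral_norm_uIoc.trans
    (setIntegral_le_integral hint.norm (Eventually.of_forall fun _ => norm_nonneg _))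

lemma tendsto_atTop_of_sub_eq_intervalIntegral (hint : Integrable h)
    (hf : ∀ x y, f y - f x = ∫ t in x..y, h t) :
    Tendsto f atTop (𝓝 (f 0 + ∫ t in Set.Ioi 0, h t)) :=
  (tendsto_const_nhds.add (intervalIntegral_tendsto_integral_Ioi 0 hint.integrableOn
    tendsto_id)).congr fun y => by rw [id, ← hf 0 y, add_sub_cancel]

lemma tendsto_atBot_of_sub_eq_intervalIntegral (hint : Integrable h)
    (hf : ∀ x y, f y - f x = ∫ t in x..y, h t) :
    Tendsto f atBot (𝓝 (f 0 - ∫ t in Set.Iic 0, h t)) :=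
  (tendsto_const_nhds.sub (intervalIntegral_tendsto_integral_Iic 0 hint.integrableOn
    tendsto_id)).congr fun x => by rw [id, ← hf x 0, sub_sub_cancel]

lemma norm_sub_limit_atBot_le_integral_norm (hint : Integrable h)
    (hf : ∀ x y, f y - f x = ∫ t in x..y, h t) {L : E} (hL : Tendsto f atBot (𝓝 L)) (t : ℝ) :
    ‖f t - L‖ ≤ ∫ s, ‖h s‖ :=
  le_of_tendsto ((tendsto_const_nhds.sub hL).norm) <| Eventually.of_forall fun y => by
    rw [hf y t]
    exact norm_intervalIntegral_le_integral_norm y t hint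

lemma norm_le_norm_mul_of_tendsto_deriv_atBot {g : ℝ → E} (hg : Differentiable ℝ g) (hg0 : g 0 = 0)
    (hint : Integrable h) (hd : ∀ x y, deriv g y - deriv g x = ∫ t in x..y, h t) {Lm : E}
    (hLm : Tendsto (deriv g) atBot (𝓝 Lm)) (x : ℝ) :
    ‖g x‖ ≤ ‖x‖ * (‖Lm‖ + ∫ t, ‖h t‖) := by
  have hbound (t : ℝ) : ‖deriv g t‖ ≤ ‖Lm‖ + ∫ t, ‖h t‖ :=
    calc ‖deriv g t‖ = ‖Lm + (deriv g t - Lm)‖ := by rw [add_sub_cancel]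
      _ ≤ ‖Lm‖ + ‖deriv g t - Lm‖ := norm_add_le _ _
      _ ≤ ‖Lm‖ + ∫ t, ‖h t‖ := by grw [norm_sub_limit_atBot_le_integral_norm hint hd hLm t]
  simpa [hg0, mul_comm] using convex_univ.norm_image_sub_le_of_norm_deriv_le
    (fun y _ => hg y) (fun t _ => hbound t) (Set.mem_univ 0) (Set.mem_univ x)

end IntegrableDerivative

lemma deriv_sub_affine {g : ℝ → ℝ} (hg : Differentiable ℝ g) (a b : ℝ) :
    deriv (fun y => g y - a - b * y) = fun x => deriv g x - b :=
  funext fun x => HasDerivAt.deriv <|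
    ((hg x).hasDerivAt.sub_const a).sub ((hasDerivAt_id x).const_mul b) |>.congr_deriv (by ring)

namespace MemW21dot

variable {g : ℝ → ℝ}

lemma differentiable (hg : MemW21dot g) : Differentiable ℝ g :=
  hg.1.differentiable one_ne_zero

lemma exists_tendsto_deriv (hg : MemW21dot g) :
    ∃ Lm Lp : ℝ, Tendsto (deriv g) atBot (𝓝 Lm) ∧ Tendsto (deriv g) atTop (𝓝 Lp) := by
  obtain ⟨-, h, hint, hd⟩ := hg
  exact ⟨_, _, tendsto_atBot_of_sub_eq_intervalIntegral hint hd,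
    tendsto_atTop_of_sub_eq_intervalIntegral hint hd⟩

lemma sub_affine (hg : MemW21dot g) (a b : ℝ) : MemW21dot (fun y => g y - a - b * y) := by
  obtain ⟨hg1, h, hint, hd⟩ := hg
  refine ⟨(hg1.sub contDiff_const).sub (contDiff_const.mul contDiff_id), h, hint, fun x y => ?_⟩
  rw [deriv_sub_affine (hg1.differentiable one_ne_zero), ← hd x y]
  ring

end MemW21dot

lemma memEalpha_sub_affine_iff {a1 a2 a3 : ℝ} (hsum : a1 + a2 + a3 = 1) {g : ℝ → ℝ}
    (hg : MemW21dot g) {Lm Lp : ℝ} (hLm : Tendsto (deriv g) atBot (𝓝 Lm))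
    (hLp : Tendsto (deriv g) atTop (𝓝 Lp)) (a b : ℝ) :
    MemEalpha a1 a2 a3 (fun y => g y - a - b * y) ↔
      a = g 0 ∧ b = a1 * Lm + a2 * deriv g 0 + a3 * Lp := by
  have hd := deriv_sub_affine hg.differentiable a b
  have hLm' := hLm.sub_const b
  have hLp' := hLp.sub_const b
  simp only [MemEalpha, hd, mul_zero, sub_zero]
  constructor
  · rintro ⟨-, hq0, Lm', Lp', hqLm, hqLp, hcond⟩
    rw [tendsto_nhds_unique hqLm hLm', tendsto_nhds_unique hqLp hLp'] at hcond
    exact ⟨by linarith, by linear_combination -hcond - b * hsum⟩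
  · rintro ⟨rfl, hb⟩
    exact ⟨hg.sub_affine _ _, sub_self _, _, _, hLm', hLp', by linear_combination -hb - b * hsum⟩

/-- For `α₁ + α₂ + α₃ = 1`, one has `Ẇ²₁(ℝ) = E_α ⊕ P₁` (unique decomposition into an
element of `E_α` plus an affine function), and every `g ∈ E_α` satisfies
`|g(x)| ≤ |x| (|g'(−∞)| + ‖g''‖₁)`. -/
theorem stmt15 (a1 a2 a3 : ℝ) (hsum : a1 + a2 + a3 = 1) :
    (∀ g : ℝ → ℝ, MemW21dot g →
      ∃! q : (ℝ → ℝ) × ℝ × ℝ, MemEalpha a1 a2 a3 q.1 ∧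
        ∀ x : ℝ, g x = q.1 x + q.2.1 + q.2.2 * x) ∧
    (∀ (g h : ℝ → ℝ) (Lm : ℝ), MemEalpha a1 a2 a3 g →
      Integrable h volume → (∀ x y : ℝ, deriv g y - deriv g x = ∫ t in x..y, h t) →
      Tendsto (deriv g) atBot (𝓝 Lm) →
      ∀ x : ℝ, |g x| ≤ |x| * (|Lm| + ∫ t : ℝ, |h t|)) := by
  refine ⟨fun g hg => ?_, fun g h Lm hg hint hd hLm x => ?_⟩
  · obtain ⟨Lm, Lp, hLm, hLp⟩ := hg.exists_tendsto_deriv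
    have hiff := memEalpha_sub_affine_iff hsum hg hLm hLp
    refine ⟨⟨_, g 0, a1 * Lm + a2 * deriv g 0 + a3 * Lp⟩, ⟨(hiff _ _).2 ⟨rfl, rfl⟩,
      fun x => by ring⟩, ?_⟩
    rintro ⟨q, a, b⟩ ⟨hq, hgq⟩
    obtain rfl : q = fun y => g y - a - b * y := funext fun y => by rw [hgq y]; ring
    obtain ⟨rfl, rfl⟩ := (hiff a b).1 hq
    rfl
  · exact norm_le_norm_mul_of_tendsto_deriv_atBot hg.1.differentiable hg.2.1 hint hd hLm x
end

section
/- Let 1 ≤ p, q < ∞ and let f : ℝ → ℝ be a function (not assumed continuous) such that the composition operator T_f(g) := f ∘ g maps L^p(X,μ) to L^q(X,μ) for a measure space (X,μ) containing a set A with 0 < μ(A) < ∞. If f is discontinuous at some point t_0 ≠ 0 (or at t_0 = 0 after normalizing f(0) = 0), then T_f is not continuous from L^p to L^q. -/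
open MeasureTheory Filter Topology
open scoped ENNReal

/-!
If `f` is discontinuous at `t₀`, pick `v ν → t₀` with `f (v ν) ↛ f t₀`. The constant functions
`v ν` and `t₀` on `A` converge in `Lᵖ`, since their distance is at most `|v ν - t₀| μ(A)^{1/p}`; as
`f 0 = 0`, their images under `T_f` are the constants `f (v ν)` and `f t₀` on `A`, at distance
`|f (v ν) - f t₀| μ(A)^{1/q}` in `L^q`, which does not tend to `0` because `0 < μ(A) < ∞`.
-/

lemma indicator_const_sub_indicator_const {α G : Type*} [AddGroup G] (s : Set α) (a b : G) :
    (s.indicator fun _ => a) - (s.indicator fun _ => b) = s.indicator fun _ => a - b :=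
  (Set.indicator_sub s _ _).symm

lemma comp_indicator_const {α M N : Type*} [Zero M] [Zero N] {s : Set α} {f : M → N}
    (hf : f 0 = 0) (a : M) :
    f ∘ (s.indicator fun _ => a) = s.indicator fun _ => f a :=
  (Set.indicator_comp_of_zero hf).symm

section IndicatorConst

variable {α ι E : Type*} [MeasurableSpace α] {μ : Measure α} [NormedAddCommGroup E]
  {s : Set α} {p : ℝ≥0∞} {l : Filter ι} {v : ι → E} {b : E}

lemma tendsto_eLpNorm_indicator_const_sub (hμs : μ s ≠ ∞) (hv : Tendsto v l (𝓝 b)) :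
    Tendsto (fun i => eLpNorm ((s.indicator fun _ => v i) - s.indicator fun _ => b) p μ)
      l (𝓝 0) := by
  simp only [indicator_const_sub_indicator_const]
  have hbound : Tendsto (fun i => ‖v i - b‖ₑ * μ s ^ (1 / p.toReal)) l (𝓝 0) := by
    simpa using ENNReal.Tendsto.mul_const (tendsto_iff_enorm_sub_tendsto_zero.mp hv)
      (Or.inr (ENNReal.rpow_ne_top_of_nonneg (one_div_nonneg.mpr ENNReal.toReal_nonneg) hμs))
  exact tendsto_of_tendsto_of_tendsto_of_le_of_le tendsto_const_nhds hbound
    (fun _ => zero_le) (fun _ => eLpNorm_indicator_const_le _ p)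

lemma tendsto_of_tendsto_eLpNorm_indicator_const_sub (hs : MeasurableSet s) (hμs₀ : μ s ≠ 0)
    (hμs : μ s ≠ ∞) (hp : p ≠ 0)
    (h : Tendsto (fun i => eLpNorm ((s.indicator fun _ => v i) - s.indicator fun _ => b) p μ)
      l (𝓝 0)) :
    Tendsto v l (𝓝 b) := by
  simp only [indicator_const_sub_indicator_const, eLpNorm_indicator_const' hs hμs₀ hp] at h
  set C := μ s ^ (1 / p.toReal)
  have hC₀ : C ≠ 0 := (ENNReal.rpow_pos (pos_iff_ne_zero.mpr hμs₀) hμs).ne'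
  have hC : C ≠ ∞ := ENNReal.rpow_ne_top_of_nonneg (one_div_nonneg.mpr ENNReal.toReal_nonneg) hμs
  rw [tendsto_iff_enorm_sub_tendsto_zero]
  simpa only [mul_assoc, ENNReal.mul_inv_cancel hC₀ hC, mul_one, zero_mul] using
    ENNReal.Tendsto.mul_const (b := C⁻¹) h (Or.inr (ENNReal.inv_ne_top.mpr hC₀))

end IndicatorConst

lemma exists_seq_tendsto_not_tendsto_comp {X Y : Type*} [TopologicalSpace X]
    [FrechetUrysohnSpace X] [TopologicalSpace Y] {f : X → Y} {x : X} (hf : ¬ ContinuousAt f x) :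
    ∃ u : ℕ → X, Tendsto u atTop (𝓝 x) ∧ ¬ Tendsto (f ∘ u) atTop (𝓝 (f x)) := by
  simpa [ContinuousAt, tendsto_nhds_iff_seq_tendsto] using hf

theorem stmt17_general {X : Type*} [MeasurableSpace X] (μ : Measure X)
    (p q : ℝ≥0∞) (hq : 1 ≤ q)
    (f : ℝ → ℝ) (hf0 : f 0 = 0)
    (A : Set X) (hA : MeasurableSet A) (hA0 : 0 < μ A) (hAfin : μ A < ∞)
    (t₀ : ℝ) (hdisc : ¬ ContinuousAt f t₀) :
    ∃ (g : ℕ → X → ℝ) (g₀ : X → ℝ),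
      (∀ ν, MemLp (g ν) p μ) ∧ MemLp g₀ p μ ∧
      Tendsto (fun ν => eLpNorm (g ν - g₀) p μ) atTop (𝓝 0) ∧
      ¬ Tendsto (fun ν => eLpNorm (f ∘ g ν - f ∘ g₀) q μ) atTop (𝓝 0) := by
  obtain ⟨v, hv, hfv⟩ := exists_seq_tendsto_not_tendsto_comp hdisc
  refine ⟨fun ν => A.indicator fun _ => v ν, A.indicator fun _ => t₀,
    fun ν => memLp_indicator_const p hA _ (Or.inr hAfin.ne),
    memLp_indicator_const p hA _ (Or.inr hAfin.ne),
    tendsto_eLpNorm_indicator_const_sub hAfin.ne hv, fun hconv => hfv ?_⟩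
  simp only [comp_indicator_const hf0] at hconv
  exact tendsto_of_tendsto_eLpNorm_indicator_const_sub hA hA0.ne' hAfin.ne
    (zero_lt_one.trans_le hq).ne' hconv

/-- If `f(0) = 0`, `T_f : g ↦ f ∘ g` maps `L^p(X,μ)` to `L^q(X,μ)`, there is a set `A`
with `0 < μ(A) < ∞`, and `f` is discontinuous at some point `t₀`, then `T_f` is not
continuous from `L^p` to `L^q`: there is a sequence converging in `L^p` whose image
does not converge in `L^q`. -/
theorem stmt17 {X : Type*} [MeasurableSpace X] (μ : Measure X)
    (p q : ℝ≥0∞) (hp : 1 ≤ p) (hp' : p ≠ ∞) (hq : 1 ≤ q) (hq' : q ≠ ∞)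
    (f : ℝ → ℝ) (hf0 : f 0 = 0)
    (hmap : ∀ g : X → ℝ, MemLp g p μ → MemLp (f ∘ g) q μ)
    (A : Set X) (hA : MeasurableSet A) (hA0 : 0 < μ A) (hAfin : μ A < ∞)
    (t₀ : ℝ) (hdisc : ¬ ContinuousAt f t₀) :
    ∃ (g : ℕ → X → ℝ) (g₀ : X → ℝ),
      (∀ ν, MemLp (g ν) p μ) ∧ MemLp g₀ p μ ∧
      Tendsto (fun ν => eLpNorm (g ν - g₀) p μ) atTop (𝓝 0) ∧
      ¬ Tendsto (fun ν => eLpNorm (f ∘ g ν - f ∘ g₀) q μ) atTop (𝓝 0) :=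
  stmt17_general μ p q hq f hf0 A hA hA0 hAfin t₀ hdisc
end
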